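/- Let R be a commutative Noetherian ring, a an ideal of R, and M an R-module such that Ext^1_R(R/a, M) is finitely generated. Then Ext^1_R(R/a, Γ_a(M)) is finitely generated. -/

import Mathlib

open CategoryTheory

universe u

/-- The `a`-torsion submodule `Γ_a(M)`: elements annihilated by some power of `a`. -/
def gammaTorsion (R : Type u) [CommRing R] (a : Ideal R) (M : Type u) [AddCommGroup M]
    [Module R M] : Submodule R M :=
  ⨆ n : ℕ, Submodule.torsionBySet R M ((a ^ n : Ideal R) : Set R)

section Algebra

variable {R : Type u} [CommRing R] (a : Ideal R) {M : Type u} [AddCommGroup M] [Module R M]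

lemma gammaTorsion_monotone : Monotone
    (fun n : ℕ => Submodule.torsionBySet R M ((a ^ n : Ideal R) : Set R)) :=
  fun _ _ h => Submodule.torsionBySet_le_torsionBySet_of_subset (Ideal.pow_le_pow_right h)

lemma mem_gammaTorsion_iff (x : M) :
    x ∈ gammaTorsion R a M ↔ ∃ n : ℕ, x ∈ Submodule.torsionBySet R M ((a ^ n : Ideal R) : Set R) :=
  Submodule.mem_iSup_of_chain ⟨_, gammaTorsion_monotone a⟩ x

lemma gammaTorsion_saturated (hfg : a.FG) (m : M)
    (h : ∀ r ∈ a, r • m ∈ gammaTorsion R a M) : m ∈ gammaTorsion R a M := by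
  obtain ⟨s, hs⟩ := hfg
  have hmem : ∀ r ∈ s, ∃ n : ℕ, r • m ∈ Submodule.torsionBySet R M ((a ^ n : Ideal R) : Set R) := by
    intro r hr
    exact (mem_gammaTorsion_iff a _).1 (h r (hs ▸ Ideal.subset_span hr))
  choose! f hf using hmem
  set N := s.sup f with hN
  -- every element of `a` sends `m` into the `a^N`-torsion
  have key : ∀ r ∈ a, r • m ∈ Submodule.torsionBySet R M ((a ^ N : Ideal R) : Set R) := by
    intro r hr
    rw [← hs] at hr
    induction hr using Submodule.span_induction with
    | mem x hx =>
        exact gammaTorsion_monotone a (Finset.le_sup hx) (hf x hx)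
    | zero => simp
    | add x y _ _ hx hy => rw [add_smul]; exact Submodule.add_mem _ hx hy
    | smul c x _ hx => rw [smul_eq_mul, mul_smul]; exact Submodule.smul_mem _ c hx
  rw [mem_gammaTorsion_iff]
  refine ⟨N + 1, (Submodule.mem_torsionBySet_iff _ _).2 ?_⟩
  rintro ⟨c, hc⟩
  have hc' : c ∈ a ^ N * a := by rwa [← pow_succ]
  show c • m = 0
  refine Submodule.mul_induction_on hc' ?_ ?_
  · intro p hp q hq
    rw [mul_smul]
    have hqm : q • m ∈ Submodule.torsionBySet R M ((a ^ N : Ideal R) : Set R) := key q hq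
    exact (Submodule.mem_torsionBySet_iff _ _).1 hqm ⟨p, hp⟩
  · intro x y hx hy
    rw [add_smul, hx, hy, add_zero]

/-- Any linear map `R⧸a → M⧸Γ_a(M)` is zero. -/
lemma hom_quot_eq_zero (hfg : a.FG)
    (u : (R ⧸ a) →ₗ[R] (M ⧸ gammaTorsion R a M)) : u = 0 := by
  have h1 : u 1 = 0 := by
    obtain ⟨m, hm⟩ := Submodule.mkQ_surjective (gammaTorsion R a M) (u 1)
    have hmem : ∀ r ∈ a, r • m ∈ gammaTorsion R a M := by
      intro r hr
      rw [← Submodule.Quotient.mk_eq_zero]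
      have : (Submodule.mkQ (gammaTorsion R a M)) (r • m) = r • u 1 := by
        rw [map_smul, hm]
      rw [Submodule.mkQ_apply] at this
      rw [this, ← map_smul]
      have : (r • (1 : R ⧸ a)) = 0 := by
        have h2 : (r • (1 : R ⧸ a)) = Ideal.Quotient.mk a r := by
          rw [← Ideal.Quotient.mk_eq_mk, show (1 : R ⧸ a) = Submodule.Quotient.mk 1 from rfl,
            ← Submodule.Quotient.mk_smul, smul_eq_mul, mul_one]
        rw [h2, Ideal.Quotient.eq_zero_iff_mem]
        exact hr
      rw [this, map_zero]
    have := gammaTorsion_saturated a hfg m hmem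
    rw [← hm, Submodule.mkQ_apply, Submodule.Quotient.mk_eq_zero]
    exact this
  apply LinearMap.ext
  intro x
  obtain ⟨r, rfl⟩ := Ideal.Quotient.mk_surjective x
  have h2 : (Ideal.Quotient.mk a r : R ⧸ a) = r • 1 := by
    rw [← Ideal.Quotient.mk_eq_mk, show (1 : R ⧸ a) = Submodule.Quotient.mk 1 from rfl,
      ← Submodule.Quotient.mk_smul, smul_eq_mul, mul_one]
  rw [h2, map_smul, h1, smul_zero]
  rfl

end Algebra

section Homology

open HomologicalComplex

variable {R : Type u} [CommRing R]

/-- Injectivity criterion for the map induced on homology of short complexes of modules. -/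
lemma mono_homologyMap_of_criterion {S T : ShortComplex (ModuleCat.{u} R)} (ψ : S ⟶ T)
    (h : ∀ x : S.X₂, S.g x = 0 → (∃ y : T.X₁, T.f y = ψ.τ₂ x) → ∃ z : S.X₁, S.f z = x) :
    Mono (ShortComplex.homologyMap ψ) := by
  have comm23 : ∀ x : S.X₂, T.g (ψ.τ₂ x) = ψ.τ₃ (S.g x) := fun x =>
    congrFun (congrArg (fun (f : S.X₂ ⟶ T.X₃) => (f : S.X₂ → T.X₃)) ψ.comm₂₃) x
  have comm12 : ∀ w : S.X₁, T.f (ψ.τ₁ w) = ψ.τ₂ (S.f w) := fun w =>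
    congrFun (congrArg (fun (f : S.X₁ ⟶ T.X₂) => (f : S.X₁ → T.X₂)) ψ.comm₁₂) w
  have hτ₂ : ∀ x : S.X₂, x ∈ LinearMap.ker S.g.hom → ψ.τ₂ x ∈ LinearMap.ker T.g.hom := by
    intro x hx
    simp only [LinearMap.mem_ker] at hx ⊢
    rw [comm23, hx, map_zero]
  let φK : ModuleCat.of R (LinearMap.ker S.g.hom) ⟶ ModuleCat.of R (LinearMap.ker T.g.hom) :=
    ModuleCat.ofHom ((ψ.τ₂.hom : S.X₂ →ₗ[R] T.X₂).restrict hτ₂)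
  have hH : ∀ x ∈ LinearMap.range S.moduleCatToCycles,
      φK x ∈ LinearMap.range T.moduleCatToCycles := by
    rintro _ ⟨w, rfl⟩
    refine ⟨ψ.τ₁ w, ?_⟩
    apply Subtype.ext
    exact comm12 w
  let φH : S.moduleCatLeftHomologyData.H ⟶ T.moduleCatLeftHomologyData.H :=
    ModuleCat.ofHom (Submodule.mapQ _ _ φK.hom (fun x hx => hH x hx))
  let γ : ShortComplex.LeftHomologyMapData ψ S.moduleCatLeftHomologyData
      T.moduleCatLeftHomologyData :=
    { φK := φK, φH := φH,
      commi := rfl,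
      commf' := by
        ext w
        apply Subtype.ext
        exact (comm12 w).symm
      commπ := by ext w; rfl }
  rw [γ.homologyMap_eq]
  have hφH : Mono φH := by
    rw [ModuleCat.mono_iff_injective]
    rw [← LinearMap.ker_eq_bot, eq_bot_iff]
    intro x hx
    obtain ⟨xx, hxx⟩ := Submodule.mkQ_surjective _ x
    subst hxx
    obtain ⟨x, hxker⟩ := xx
    replace hx : φH.hom (Submodule.mkQ _ ⟨x, hxker⟩) = 0 := hx
    have hx' : Submodule.Quotient.mk (φK ⟨x, hxker⟩) =
        (0 : LinearMap.ker T.g.hom ⧸ LinearMap.range T.moduleCatToCycles) := hx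
    rw [Submodule.Quotient.mk_eq_zero] at hx'
    obtain ⟨y, hy⟩ := hx'
    have hy' : T.f y = ψ.τ₂ x := congrArg Subtype.val hy
    obtain ⟨z, hz⟩ := h x hxker ⟨y, hy'⟩
    show Submodule.mkQ _ ⟨x, hxker⟩ = (0 : LinearMap.ker S.g.hom ⧸ LinearMap.range S.moduleCatToCycles)
    rw [Submodule.mkQ_apply, Submodule.Quotient.mk_eq_zero]
    exact ⟨z, Subtype.ext hz⟩
  haveI : Mono γ.φH := hφH
  infer_instance

end Homology

noncomputable section
variable {R : Type u} [CommRing R] {X Y Z : ModuleCat.{u} R}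
  (P : ProjectiveResolution X) (f : Y ⟶ Z) (n : ℕ)

def yonedaComplexMap :
    P.complex.linearYonedaObj R Y ⟶ P.complex.linearYonedaObj R Z :=
  (HomologicalComplex.unopFunctor _ _).map
    ((NatTrans.mapHomologicalComplex
      (NatTrans.rightOp ((linearYoneda R (ModuleCat.{u} R)).map f))
      (ComplexShape.down ℕ)).app P.complex).op

example (m : ℕ) (x : P.complex.X m ⟶ Y) : ((yonedaComplexMap P f).f m) x = x ≫ f := rfl

example : (HomologicalComplex.opFunctor _ _).map (yonedaComplexMap P f).op =
    ((NatTrans.mapHomologicalComplex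
      (NatTrans.rightOp ((linearYoneda R (ModuleCat.{u} R)).map f))
      (ComplexShape.down ℕ)).app P.complex) := rfl

example : ((Ext R (ModuleCat.{u} R) n).obj (Opposite.op X)).map f =
    ((NatTrans.leftDerived (NatTrans.rightOp ((linearYoneda R (ModuleCat.{u} R)).map f)) n).app X).unop := rfl

lemma unop_conj {C : Type*} [Category C] {A B : C} {A' B' : Cᵒᵖ}
    (a : A' ≅ Opposite.op A) (b : B' ≅ Opposite.op B) (u : B' ⟶ A') (v : A ⟶ B)
    (h : u ≫ a.hom = b.hom ≫ v.op) :
    u.unop ≫ b.inv.unop = a.inv.unop ≫ v := by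
  apply Quiver.Hom.op_inj
  simp only [op_comp, Quiver.Hom.op_unop]
  rw [Iso.eq_comp_inv, Category.assoc, h, Iso.inv_hom_id_assoc]

lemma star :
    (HomologicalComplex.homologyMap
      ((NatTrans.mapHomologicalComplex
        (NatTrans.rightOp ((linearYoneda R (ModuleCat.{u} R)).map f))
        (ComplexShape.down ℕ)).app P.complex) n).unop
      ≫ (HomologicalComplex.homologyUnop _ n).inv =
    (HomologicalComplex.homologyUnop
        ((((linearYoneda R (ModuleCat.{u} R)).obj Y).rightOp.mapHomologicalComplex
          (ComplexShape.down ℕ)).obj P.complex) n).inv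
      ≫ HomologicalComplex.homologyMap (yonedaComplexMap P f) n := by
  have h := HomologicalComplex.homologyOp_hom_naturality (yonedaComplexMap P f) n
  rw [show (HomologicalComplex.opFunctor _ _).map (yonedaComplexMap P f).op =
    ((NatTrans.mapHomologicalComplex
      (NatTrans.rightOp ((linearYoneda R (ModuleCat.{u} R)).map f))
      (ComplexShape.down ℕ)).app P.complex) from rfl] at h
  exact unop_conj _ _ _ _ h

lemma star' :
    (HomologicalComplex.homologyMap
      ((NatTrans.mapHomologicalComplex
        (NatTrans.rightOp ((linearYoneda R (ModuleCat.{u} R)).map f))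
        (ComplexShape.down ℕ)).app P.complex) n).unop =
    (HomologicalComplex.homologyUnop
        ((((linearYoneda R (ModuleCat.{u} R)).obj Y).rightOp.mapHomologicalComplex
          (ComplexShape.down ℕ)).obj P.complex) n).inv
      ≫ HomologicalComplex.homologyMap (yonedaComplexMap P f) n
      ≫ (HomologicalComplex.homologyUnop
        ((((linearYoneda R (ModuleCat.{u} R)).obj Z).rightOp.mapHomologicalComplex
          (ComplexShape.down ℕ)).obj P.complex) n).hom := by
  exact ((Iso.comp_inv_eq _).mp (star P f n)).trans (Category.assoc _ _ _)

lemma ext_map_eq :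
    ((Ext R (ModuleCat.{u} R) n).obj (Opposite.op X)).map f =
      (P.isoExt n Y).hom ≫ HomologicalComplex.homologyMap (yonedaComplexMap P f) n ≫
        (P.isoExt n Z).inv := by
  have h0 : ((Ext R (ModuleCat.{u} R) n).obj (Opposite.op X)).map f =
      ((NatTrans.leftDerived (NatTrans.rightOp
        ((linearYoneda R (ModuleCat.{u} R)).map f)) n).app X).unop := rfl
  rw [h0, ProjectiveResolution.leftDerived_app_eq
    (NatTrans.rightOp ((linearYoneda R (ModuleCat.{u} R)).map f)) P n]
  simp only [unop_comp]
  dsimp only [ProjectiveResolution.isoExt, Iso.trans_hom, Iso.trans_inv, Iso.symm_hom,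
    Iso.symm_inv, Iso.unop_hom, Iso.unop_inv]
  have h1 : ((HomologicalComplex.homologyFunctor (ModuleCat.{u} R)ᵒᵖ
      (ComplexShape.down ℕ) n).map
      ((NatTrans.mapHomologicalComplex (NatTrans.rightOp
        ((linearYoneda R (ModuleCat.{u} R)).map f))
        (ComplexShape.down ℕ)).app P.complex)).unop =
    (HomologicalComplex.homologyMap
      ((NatTrans.mapHomologicalComplex (NatTrans.rightOp
        ((linearYoneda R (ModuleCat.{u} R)).map f))
        (ComplexShape.down ℕ)).app P.complex) n).unop := rfl
  rw [h1, star' P f n]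
  rfl

lemma mono_homologyMap_one {K L : CochainComplex (ModuleCat.{u} R) ℕ} (φ : K ⟶ L)
    (h : ∀ x : K.X 1, K.d 1 2 x = 0 →
      (∃ y : L.X 0, L.d 0 1 y = φ.f 1 x) → ∃ z : K.X 0, K.d 0 1 z = x) :
    Mono (HomologicalComplex.homologyMap φ 1) := by
  have e := HomologicalComplex.natIsoSc' (ModuleCat.{u} R) (ComplexShape.up ℕ) 0 1 2
    (by simp) (by simp)
  have hcomm := e.hom.naturality φ
  have h0 : HomologicalComplex.homologyMap φ 1 = ShortComplex.homologyMap
      ((HomologicalComplex.shortComplexFunctor (ModuleCat.{u} R) (ComplexShape.up ℕ) 1).map φ) :=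
    rfl
  have hψ : (HomologicalComplex.shortComplexFunctor (ModuleCat.{u} R) (ComplexShape.up ℕ) 1).map φ
      = e.hom.app K ≫
        (HomologicalComplex.shortComplexFunctor' (ModuleCat.{u} R) (ComplexShape.up ℕ) 0 1 2).map φ
        ≫ e.inv.app L := by
    rw [← Category.assoc, ← hcomm, Category.assoc, Iso.hom_inv_id_app, Category.comp_id]
  rw [h0, hψ, ShortComplex.homologyMap_comp, ShortComplex.homologyMap_comp]
  haveI : Mono (ShortComplex.homologyMap
      ((HomologicalComplex.shortComplexFunctor' (ModuleCat.{u} R)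
        (ComplexShape.up ℕ) 0 1 2).map φ)) :=
    mono_homologyMap_of_criterion _ h
  haveI : IsIso (ShortComplex.homologyMap (e.hom.app K)) :=
    (inferInstance : IsIso (ShortComplex.homologyMapIso (e.app K)).hom)
  haveI : IsIso (ShortComplex.homologyMap (e.inv.app L)) :=
    (inferInstance : IsIso (ShortComplex.homologyMapIso ((e.app L).symm)).hom)
  have : Mono (ShortComplex.homologyMap (e.inv.app L)) := inferInstance
  have hK : Mono (ShortComplex.homologyMap (e.hom.app K)) := IsIso.mono_of_iso _
  exact @mono_comp _ _ _ _ _ _ hK _ (@mono_comp _ _ _ _ _ _ inferInstance _ this)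


/-- `Ext^n_R(R/a, M)` as an object of `ModuleCat R`. -/
noncomputable def extPowQuot (R : Type u) [CommRing R] (a : Ideal R) (n : ℕ)
    (M : ModuleCat.{u} R) : ModuleCat.{u} R :=
  ((Ext R (ModuleCat.{u} R) n).obj (Opposite.op (ModuleCat.of R (R ⧸ a)))).obj M

/-- If `Ext^1_R(R/a, M)` is finitely generated, then so is `Ext^1_R(R/a, Γ_a(M))`. -/
theorem finite_ext_one_gammaTorsion (R : Type u) [CommRing R] [IsNoetherianRing R]
    (a : Ideal R) (M : Type u) [AddCommGroup M] [Module R M]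
    (h : Module.Finite R (extPowQuot R a 1 (ModuleCat.of R M))) :
    Module.Finite R (extPowQuot R a 1 (ModuleCat.of R (gammaTorsion R a M))) := by
  classical
  let Γ : Submodule R M := gammaTorsion R a M
  let ι : ModuleCat.of R Γ ⟶ ModuleCat.of R M := ModuleCat.ofHom Γ.subtype
  obtain ⟨P⟩ : Nonempty (ProjectiveResolution (ModuleCat.of R (R ⧸ a))) :=
    HasProjectiveResolution.out
  -- the element-level criterion for injectivity on H¹
  have hcrit : ∀ x : (P.complex.linearYonedaObj R (ModuleCat.of R Γ)).X 1,
      (P.complex.linearYonedaObj R (ModuleCat.of R Γ)).d 1 2 x = 0 →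
      (∃ y, (P.complex.linearYonedaObj R (ModuleCat.of R M)).d 0 1 y =
        (yonedaComplexMap P ι).f 1 x) →
      ∃ z, (P.complex.linearYonedaObj R (ModuleCat.of R Γ)).d 0 1 z = x := by
    intro x _ hy
    obtain ⟨y, hy⟩ := hy
    change P.complex.X 0 ⟶ ModuleCat.of R M at y
    change P.complex.X 1 ⟶ ModuleCat.of R Γ at x
    have hy' : P.complex.d 1 0 ≫ y = x ≫ ι := hy
    let q : ModuleCat.of R M ⟶ ModuleCat.of R (M ⧸ Γ) := ModuleCat.ofHom Γ.mkQ
    have hιq : ι ≫ q = 0 := by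
      ext : 1
      apply LinearMap.ext
      rintro ⟨m, hm⟩
      show Γ.mkQ m = 0
      rw [Submodule.mkQ_apply, Submodule.Quotient.mk_eq_zero]
      exact hm
    have hq : P.complex.d 1 0 ≫ (y ≫ q) = 0 := by
      rw [← Category.assoc, hy', Category.assoc, hιq, Limits.comp_zero]
    obtain ⟨u, hu⟩ := Limits.CokernelCofork.IsColimit.desc' P.isColimitCokernelCofork (y ≫ q) hq
    have hu' : P.π.f 0 ≫ u = y ≫ q := hu
    have hu0 : u = 0 := ModuleCat.hom_ext (hom_quot_eq_zero a (IsNoetherian.noetherian a) u.hom)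
    have hyq : y ≫ q = 0 := by rw [← hu', hu0]; exact Limits.comp_zero
    have hmem : ∀ p : P.complex.X 0, y p ∈ Γ := by
      intro p
      have : Γ.mkQ (y p) = 0 := congrFun (congrArg (fun (f : _ ⟶ ModuleCat.of R (M ⧸ Γ)) =>
        (f : _ → M ⧸ Γ)) hyq) p
      rwa [Submodule.mkQ_apply, Submodule.Quotient.mk_eq_zero] at this
    refine ⟨ModuleCat.ofHom (LinearMap.codRestrict Γ y.hom hmem), ?_⟩
    show P.complex.d 1 0 ≫ ModuleCat.ofHom (LinearMap.codRestrict Γ y.hom hmem) = x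
    ext : 1
    apply LinearMap.ext
    intro p
    apply Subtype.ext
    show y (P.complex.d 1 0 p) = ι.hom (x p)
    exact congrFun (congrArg (fun (f : _ ⟶ ModuleCat.of R M) => (f : _ → M)) hy') p
  -- injectivity of the induced map on Ext¹
  haveI hmono : Mono (((Ext R (ModuleCat.{u} R) 1).obj
      (Opposite.op (ModuleCat.of R (R ⧸ a)))).map ι) := by
    rw [ext_map_eq P ι 1]
    haveI := mono_homologyMap_one (yonedaComplexMap P ι) hcrit
    apply mono_comp
  have hinj := (ModuleCat.mono_iff_injective _).1 hmono
  haveI : Module.Finite R (((Ext R (ModuleCat.{u} R) 1).obj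
      (Opposite.op (ModuleCat.of R (R ⧸ a)))).obj (ModuleCat.of R M)) := h
  haveI : IsNoetherian R (((Ext R (ModuleCat.{u} R) 1).obj
      (Opposite.op (ModuleCat.of R (R ⧸ a)))).obj (ModuleCat.of R M)) :=
    isNoetherian_of_isNoetherianRing_of_finite R _
  haveI : IsNoetherian R (((Ext R (ModuleCat.{u} R) 1).obj
      (Opposite.op (ModuleCat.of R (R ⧸ a)))).obj (ModuleCat.of R Γ)) :=
    isNoetherian_of_injective _ hinj
  show Module.Finite R (((Ext R (ModuleCat.{u} R) 1).obj
      (Opposite.op (ModuleCat.of R (R ⧸ a)))).obj (ModuleCat.of R Γ))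
  exact Module.finite_def.2 (IsNoetherian.noetherian ⊤)
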